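/- For every positive integer m, the 4-coloring of [8m+3] obtained by repeating the block ABCC m times, then the block DDAB m times, followed by the three elements colored D, B, A, contains no rainbow 4-term arithmetic progression. -/
import Mathlib


inductive Color | A | B | C | D
  deriving DecidableEq

open Color

/-- A coloring `c` of `{1,...,n}` contains a rainbow 4-term AP. -/
def RainbowAP4 (n : ℕ) (c : ℕ → Color) : Prop :=
  ∃ t d : ℕ, 1 ≤ t ∧ 1 ≤ d ∧ t + 3*d ≤ n ∧
    c t ≠ c (t+d) ∧ c t ≠ c (t+2*d) ∧ c t ≠ c (t+3*d) ∧
    c (t+d) ≠ c (t+2*d) ∧ c (t+d) ≠ c (t+3*d) ∧ c (t+2*d) ≠ c (t+3*d)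

/-- The coloring for STATEMENT 3. -/
def col (m i : ℕ) : Color :=
  if i ≤ 4*m then (if i % 4 = 1 then A else if i % 4 = 2 then B else C) else if i ≤ 8*m then (if i % 4 = 1 ∨ i % 4 = 2 then D else if i % 4 = 3 then A else B) else if i = 8*m+1 then D else if i = 8*m+2 then B else A

lemma colA' {m i : ℕ} (h : col m i = A) (hi : i ≤ 8*m+3) :
    (i % 4 = 1 ∧ i ≤ 4*m) ∨ (i % 4 = 3 ∧ 4*m < i) := by
  unfold col at h
  split_ifs at h <;> first | omega | simp at h

lemma colB' {m i : ℕ} (h : col m i = B) (hi : i ≤ 8*m+3) :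
    (i % 4 = 2 ∧ (i ≤ 4*m ∨ i = 8*m+2)) ∨ (i % 4 = 0 ∧ 4*m < i ∧ i ≤ 8*m) := by
  unfold col at h
  split_ifs at h <;> first | omega | simp at h

lemma colC' {m i : ℕ} (h : col m i = C) (hi : i ≤ 8*m+3) :
    (i % 4 = 3 ∨ i % 4 = 0) ∧ i ≤ 4*m := by
  unfold col at h
  split_ifs at h <;> first | omega | simp at h

lemma colD' {m i : ℕ} (h : col m i = D) (hi : i ≤ 8*m+3) :
    (i % 4 = 1 ∧ 4*m < i ∧ i ≤ 8*m+1) ∨ (i % 4 = 2 ∧ 4*m < i ∧ i ≤ 8*m) := by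
  unfold col at h
  split_ifs at h <;> first | omega | simp at h

instance : Fintype Color :=
  ⟨⟨{A, B, C, D}, by decide⟩, by intro x; cases x <;> decide⟩

lemma mem4 : ∀ (c0 c1 c2 c3 x : Color), c0 ≠ c1 → c0 ≠ c2 → c0 ≠ c3 →
    c1 ≠ c2 → c1 ≠ c3 → c2 ≠ c3 → x = c0 ∨ x = c1 ∨ x = c2 ∨ x = c3 := by
  decide

set_option maxHeartbeats 4000000 in
theorem stmt_3 (m : ℕ) (hm : 0 < m) :
    ¬ RainbowAP4 (8*m+3) (col m) := by
  rintro ⟨t, d, ht, hd, hn, h1, h2, h3, h4, h5, h6⟩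
  have hC := mem4 _ _ _ _ C h1 h2 h3 h4 h5 h6
  have hD := mem4 _ _ _ _ D h1 h2 h3 h4 h5 h6
  have hA := mem4 _ _ _ _ A h1 h2 h3 h4 h5 h6
  have hB := mem4 _ _ _ _ B h1 h2 h3 h4 h5 h6
  rcases hC with hC|hC|hC|hC <;> rcases hD with hD|hD|hD|hD <;>
    rcases hA with hA|hA|hA|hA <;> rcases hB with hB|hB|hB|hB <;>
  all_goals
    have c1 := colC' hC.symm (by omega)
    have c2 := colD' hD.symm (by omega)
    have c3 := colA' hA.symm (by omega)
    have c4 := colB' hB.symm (by omega)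
    omega
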